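/- arXiv:math/0610669 — 6 statements merged into one kernel-verified Lean document; each statement's English description precedes it below -/
import Mathlib

section
/- Let k be an algebraically closed field of characteristic zero, n ≥ 1, and G a finite subgroup of GL_n(k). Suppose α : k^n → k^n is a polynomial map, i.e. there are polynomials P_1,…,P_n ∈ k[x_1,…,x_n] with α(x) = (P_1(x),…,P_n(x)), such that f(α(x)) = f(x) for every G-invariant polynomial f ∈ k[x_1,…,x_n] and every x ∈ k^n. Then there exists g ∈ G such that α(x) = g·x for all x ∈ k^n. -/
/-!
The orbit products `∏_{g ∈ G} (1 - h) ∘ g` are `G`-invariant, and choosing `h` to be `1` at `x`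
and `0` on the orbit of `y` shows that they separate `G`-orbits. Hence `α x` lies in the orbit
`G · x` for every `x`, i.e. every point of `k^n` is a zero of one of the finitely many tuples
`P - g`, `g ∈ G`. Since `k` is infinite, affine space is not a finite union of proper
hypersurfaces, so one of these tuples vanishes identically.
-/

open MvPolynomial Matrix

namespace MvPolynomial

lemma exists_eval_eq_one_and_eval_eq_zero {k σ : Type*} [Field k] (T : Finset (σ → k))
    {y : σ → k} (hy : y ∉ T) :
    ∃ h : MvPolynomial σ k, eval y h = 1 ∧ ∀ t ∈ T, eval t h = 0 := by
  have hne : ∀ t : T, ∃ i, y i ≠ t.1 i := fun t => Function.ne_iff.mp fun h => hy (h ▸ t.2)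
  choose i hi using hne
  refine ⟨∏ t : T, C (y (i t) - t.1 (i t))⁻¹ * (X (i t) - C (t.1 (i t))), ?_, fun t ht => ?_⟩
  · simp [map_prod, inv_mul_cancel₀ (sub_ne_zero.mpr (hi _))]
  · rw [map_prod]
    exact Finset.prod_eq_zero (Finset.mem_univ ⟨t, ht⟩) (by simp)

variable {R σ : Type*} [CommRing R] [IsDomain R] [Infinite R]

lemma exists_eq_zero_of_forall_exists_eval_eq_zero {ι : Type*} [Finite ι]
    (p : ι → MvPolynomial σ R) (h : ∀ x, ∃ i, eval x (p i) = 0) : ∃ i, p i = 0 := by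
  cases nonempty_fintype ι
  by_contra! hp
  apply Finset.prod_ne_zero_iff.mpr fun i _ => hp i
  refine MvPolynomial.funext fun x => ?_
  obtain ⟨i, hi⟩ := h x
  simpa [map_prod] using Finset.prod_eq_zero (Finset.mem_univ i) hi

lemma exists_eq_of_forall_exists_eval_eq {τ ι : Type*} [Finite ι]
    (P : τ → MvPolynomial σ R) (Q : ι → τ → MvPolynomial σ R)
    (h : ∀ x, ∃ i, ∀ j, eval x (P j) = eval x (Q i j)) : ∃ i, P = Q i := by
  by_contra! hPQ
  choose j hj using fun i => Function.ne_iff.mp (hPQ i)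
  have hzero : ∀ x, ∃ i, eval x (P (j i) - Q i (j i)) = 0 := fun x => by
    obtain ⟨i, hi⟩ := h x
    exact ⟨i, by simp [hi]⟩
  obtain ⟨i, hi⟩ := exists_eq_zero_of_forall_exists_eval_eq_zero _ hzero
  exact hj i (sub_eq_zero.mp hi)

end MvPolynomial

lemma Matrix.eval_bind₁_toMvPolynomial {R σ : Type*} [CommSemiring R] [Fintype σ]
    (M : Matrix σ σ R) (x : σ → R) (f : MvPolynomial σ R) :
    eval x (bind₁ M.toMvPolynomial f) = eval (M *ᵥ x) f := by
  change eval₂Hom (RingHom.id R) x _ = _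
  rw [eval₂Hom_bind₁]
  exact congrArg (eval · f) (funext (toMvPolynomial_eval_eq_apply M · x))

namespace Matrix.GeneralLinearGroup

variable {σ : Type*} [Fintype σ] [DecidableEq σ]

section orbitProd

variable {R : Type*} [CommRing R] (G : Subgroup (GL σ R)) [Fintype G]

noncomputable def orbitProd (f : MvPolynomial σ R) : MvPolynomial σ R :=
  ∏ g : G, bind₁ ((g : GL σ R) : Matrix σ σ R).toMvPolynomial f

variable {G}

lemma eval_orbitProd (f : MvPolynomial σ R) (x : σ → R) :
    eval x (orbitProd G f) = ∏ g : G, eval (((g : GL σ R) : Matrix σ σ R) *ᵥ x) f := by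
  simp only [orbitProd, map_prod, eval_bind₁_toMvPolynomial]

lemma eval_mulVec_orbitProd (f : MvPolynomial σ R) {g : GL σ R} (hg : g ∈ G) (x : σ → R) :
    eval ((g : Matrix σ σ R) *ᵥ x) (orbitProd G f) = eval x (orbitProd G f) := by
  simp only [eval_orbitProd, mulVec_mulVec]
  exact Fintype.prod_equiv (Equiv.mulRight ⟨g, hg⟩) _ _ fun _ => by simp

end orbitProd

theorem exists_invariant_eval_ne {k : Type*} [Field k] {G : Subgroup (GL σ k)} [Finite G]
    {x y : σ → k}
    (hxy : ∀ g ∈ G, y ≠ (g : Matrix σ σ k) *ᵥ x) :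
    ∃ F : MvPolynomial σ k,
      (∀ g ∈ G, ∀ z, eval ((g : Matrix σ σ k) *ᵥ z) F = eval z F) ∧ eval x F ≠ eval y F := by
  classical
  cases nonempty_fintype G
  have hx : x ∉ Finset.univ.image fun g : G => ((g : GL σ k) : Matrix σ σ k) *ᵥ y := by
    simp only [Finset.mem_image, Finset.mem_univ, true_and, not_exists]
    rintro ⟨g, hg⟩ rfl
    exact hxy g⁻¹ (G.inv_mem hg) (by rw [mulVec_mulVec, Units.inv_mul, one_mulVec])
  obtain ⟨h, hx1, hy0⟩ := exists_eval_eq_one_and_eval_eq_zero _ hx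
  refine ⟨orbitProd G (1 - h), fun g hg z => eval_mulVec_orbitProd _ hg z, ?_⟩
  rw [eval_orbitProd, eval_orbitProd, Finset.prod_eq_zero (Finset.mem_univ 1) (by simp [hx1]),
    Finset.prod_eq_one fun g _ => by simp [hy0 _ (Finset.mem_image_of_mem _ (Finset.mem_univ g))]]
  exact zero_ne_one

end Matrix.GeneralLinearGroup

open Matrix.GeneralLinearGroup in
theorem luna_stmt2_general (k : Type*) [Field k] [IsAlgClosed k]
    (n : ℕ) (G : Subgroup (Matrix.GeneralLinearGroup (Fin n) k)) [Finite G]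
    (P : Fin n → MvPolynomial (Fin n) k)
    (α : (Fin n → k) → (Fin n → k))
    (hα : ∀ (x : Fin n → k) (i : Fin n), α x i = MvPolynomial.eval x (P i))
    (hinv : ∀ f : MvPolynomial (Fin n) k,
      (∀ g ∈ G, ∀ x : Fin n → k,
        MvPolynomial.eval (Matrix.mulVec (g : Matrix (Fin n) (Fin n) k) x) f =
          MvPolynomial.eval x f) →
      ∀ x : Fin n → k, MvPolynomial.eval (α x) f = MvPolynomial.eval x f) :
    ∃ g ∈ G, ∀ x : Fin n → k,
      α x = Matrix.mulVec (g : Matrix (Fin n) (Fin n) k) x := by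
  have horbit : ∀ x, ∃ g ∈ G, α x = (g : Matrix (Fin n) (Fin n) k) *ᵥ x := by
    intro x
    by_contra! h
    obtain ⟨F, hF, hne⟩ := exists_invariant_eval_ne h
    exact hne (hinv F hF x).symm
  have hcover : ∀ x, ∃ g : G, ∀ i,
      eval x (P i) = eval x (((g : GL (Fin n) k) : Matrix (Fin n) (Fin n) k).toMvPolynomial i) := by
    intro x
    obtain ⟨g, hg, hx⟩ := horbit x
    exact ⟨⟨g, hg⟩, fun i => by rw [← hα, hx, toMvPolynomial_eval_eq_apply]⟩
  obtain ⟨⟨g, hg⟩, hP⟩ := exists_eq_of_forall_exists_eval_eq P _ hcover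
  exact ⟨g, hg, fun x => funext fun i => by rw [hα, hP, toMvPolynomial_eval_eq_apply]⟩

/-- If `α : k^n → k^n` is a polynomial map (given by polynomials `P_1, …, P_n`) such
that `f(α(x)) = f(x)` for every `G`-invariant polynomial `f` and every point `x`, where
`G` is a finite subgroup of `GL_n(k)` and `k` is algebraically closed of characteristic
zero, then `α` is translation by some element `g ∈ G`. -/
theorem luna_stmt2 (k : Type*) [Field k] [IsAlgClosed k] [CharZero k]
    (n : ℕ) (hn : 1 ≤ n) (G : Subgroup (Matrix.GeneralLinearGroup (Fin n) k)) [Finite G]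
    (P : Fin n → MvPolynomial (Fin n) k)
    (α : (Fin n → k) → (Fin n → k))
    (hα : ∀ (x : Fin n → k) (i : Fin n), α x i = MvPolynomial.eval x (P i))
    (hinv : ∀ f : MvPolynomial (Fin n) k,
      (∀ g ∈ G, ∀ x : Fin n → k,
        MvPolynomial.eval (Matrix.mulVec (g : Matrix (Fin n) (Fin n) k) x) f =
          MvPolynomial.eval x f) →
      ∀ x : Fin n → k, MvPolynomial.eval (α x) f = MvPolynomial.eval x f) :
    ∃ g ∈ G, ∀ x : Fin n → k,
      α x = Matrix.mulVec (g : Matrix (Fin n) (Fin n) k) x :=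
  luna_stmt2_general k n G P α hα hinv
end

section
/- Let k be an algebraically closed field of characteristic zero, n ≥ 1, d_1,…,d_n ∈ ℤ and c = (c_1,…,c_n) ∈ k^n. Let O = {(t^{d_1}c_1,…,t^{d_n}c_n) : t ∈ k^×} ⊆ k^n be the orbit of c under the multiplicative-group action t·e_i = t^{d_i}e_i. Then the following are equivalent: (i) O is Zariski closed in k^n (that is, every point y ∈ k^n such that f(y) = 0 for every polynomial f ∈ k[x_1,…,x_n] vanishing identically on O already lies in O) and the stabilizer {t ∈ k^× : t^{d_i}c_i = c_i for all i} is finite; (ii) there exist indices i and j with d_i < 0, d_j > 0, c_i ≠ 0 and c_j ≠ 0. -/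
open MvPolynomial Finset

section LunaAux

variable {k : Type*} [Field k]

private lemma luna_prod_zpow_grp {ι : Type*} (g : kˣ) (s : Finset ι) (f : ι → ℤ) :
    ∏ i ∈ s, g ^ f i = g ^ (∑ i ∈ s, f i) := by
  induction s using Finset.cons_induction with
  | empty => simp
  | cons a s ha ih => simp [Finset.prod_cons, Finset.sum_cons, ih, zpow_add]

private lemma luna_prod_val {ι : Type*} (s : Finset ι) (g : ι → kˣ) :
    ∏ i ∈ s, ((g i : k)) = ((∏ i ∈ s, g i : kˣ) : k) := by
  induction s using Finset.cons_induction with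
  | empty => simp
  | cons a s ha ih => rw [Finset.prod_cons, Finset.prod_cons, ih, Units.val_mul]

private lemma luna_prod_zpow₀ {ι : Type*} (n : ℤ) (s : Finset ι) (f : ι → k) :
    (∏ i ∈ s, f i) ^ n = ∏ i ∈ s, (f i) ^ n := by
  induction s using Finset.cons_induction with
  | empty => simp
  | cons a s ha ih => simp [Finset.prod_cons, ih, mul_zpow]

private lemma luna_bezout {ι : Type*} [DecidableEq ι] (s : Finset ι) (f : ι → ℤ) :
    ∃ u : ι → ℤ, ∑ i ∈ s, u i * f i = s.gcd f := by
  induction s using Finset.cons_induction with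
  | empty => exact ⟨0, by simp⟩
  | cons a s ha ih =>
    obtain ⟨u, hu⟩ := ih
    set g := s.gcd f with hg
    refine ⟨fun i => if i = a then Int.gcdA (f a) g else Int.gcdB (f a) g * u i, ?_⟩
    rw [Finset.sum_cons, Finset.cons_eq_insert a s ha, Finset.gcd_insert,
      ← Int.coe_gcd, Int.gcd_eq_gcd_ab]
    have : ∑ i ∈ s, (if i = a then Int.gcdA (f a) g else Int.gcdB (f a) g * u i) * f i
        = Int.gcdB (f a) g * ∑ i ∈ s, u i * f i := by
      rw [Finset.mul_sum]
      refine Finset.sum_congr rfl fun i hi => ?_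
      rw [if_neg (by rintro rfl; exact ha hi)]; ring
    rw [this, hu]; simp; ring

private lemma luna_gcd_nonneg {ι : Type*} (s : Finset ι) (f : ι → ℤ) : 0 ≤ s.gcd f := by
  have h := Finset.normalize_gcd (s := s) (f := f)
  rcases le_or_gt 0 (s.gcd f) with h' | h'
  · exact h'
  · rw [Int.normalize_of_nonpos h'.le] at h; omega

/-- The key relations: any monomial identity of equal weight that holds on the orbit
holds at any point `y` of the Zariski closure of the orbit. -/
private lemma luna_R1 {n : ℕ} (d : Fin n → ℤ) (c : Fin n → k) (y : Fin n → k)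
    (hy : ∀ f : MvPolynomial (Fin n) k,
        (∀ z ∈ {y : Fin n → k | ∃ t : kˣ, ∀ i, y i = ((t ^ d i : kˣ) : k) * c i},
          MvPolynomial.eval z f = 0) → MvPolynomial.eval y f = 0)
    (S : Finset (Fin n)) (p q : Fin n → ℕ)
    (hpq : ∑ m ∈ S, (p m : ℤ) * d m = ∑ m ∈ S, (q m : ℤ) * d m) :
    (∏ m ∈ S, c m ^ q m) * ∏ m ∈ S, y m ^ p m
      = (∏ m ∈ S, c m ^ p m) * ∏ m ∈ S, y m ^ q m := by
  set f : MvPolynomial (Fin n) k :=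
    C (∏ m ∈ S, c m ^ q m) * (∏ m ∈ S, (X m : MvPolynomial (Fin n) k) ^ p m)
      - C (∏ m ∈ S, c m ^ p m) * ∏ m ∈ S, (X m : MvPolynomial (Fin n) k) ^ q m with hf
  have h0 : MvPolynomial.eval y f = 0 := by
    apply hy
    rintro z ⟨t, ht⟩
    have key : ∀ r : Fin n → ℕ, ∏ m ∈ S, z m ^ r m
        = ((t ^ (∑ m ∈ S, d m * r m) : kˣ) : k) * ∏ m ∈ S, c m ^ r m := by
      intro r
      have h1 : ∀ m ∈ S, z m ^ r m = ((t ^ (d m * r m) : kˣ) : k) * c m ^ r m := by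
        intro m _
        rw [ht m, mul_pow, ← Units.val_pow_eq_pow_val, ← zpow_natCast (t ^ d m), ← zpow_mul]
      rw [Finset.prod_congr rfl h1, Finset.prod_mul_distrib, luna_prod_val,
        luna_prod_zpow_grp]
    have hsum : ∑ m ∈ S, d m * p m = ∑ m ∈ S, d m * q m := by
      rw [show ∑ m ∈ S, d m * p m = ∑ m ∈ S, (p m : ℤ) * d m from
          Finset.sum_congr rfl fun m _ => mul_comm _ _,
        show ∑ m ∈ S, d m * q m = ∑ m ∈ S, (q m : ℤ) * d m from
          Finset.sum_congr rfl fun m _ => mul_comm _ _, hpq]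
    rw [hf]
    simp only [map_sub, map_mul, eval_C, map_prod, map_pow, eval_X]
    rw [key p, key q, hsum]
    ring
  rw [hf] at h0
  simp only [map_sub, map_mul, eval_C, map_prod, map_pow, eval_X] at h0
  exact sub_eq_zero.mp h0

/-- Auxiliary: coordinates in the support of `c` do not vanish at points of the closure
of the orbit, given a two-term vanishing weight relation. -/
private lemma luna_yne {n : ℕ} (d : Fin n → ℤ) (c : Fin n → k) (y : Fin n → k)
    (hy : ∀ f : MvPolynomial (Fin n) k,
        (∀ z ∈ {y : Fin n → k | ∃ t : kˣ, ∀ i, y i = ((t ^ d i : kˣ) : k) * c i},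
          MvPolynomial.eval z f = 0) → MvPolynomial.eval y f = 0)
    (S : Finset (Fin n)) (hSne : ∀ l ∈ S, c l ≠ 0)
    (m m' : Fin n) (hmS : m ∈ S) (hm'S : m' ∈ S) (hmm' : m ≠ m')
    (α β : ℤ) (hα : 0 < α) (hβ : 0 ≤ β) (hrel : α * d m + β * d m' = 0) : y m ≠ 0 := by
  classical
  intro hym
  set p : Fin n → ℕ := fun l => if l = m then α.toNat else if l = m' then β.toNat else 0 with hp
  have hpm : p m = α.toNat := by simp [hp]
  have hpm' : p m' = β.toNat := by simp [hp, hmm'.symm]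
  have hR := luna_R1 d c y hy S p 0 ?_
  · simp only [Pi.zero_apply, pow_zero, Finset.prod_const_one, one_mul, mul_one] at hR
    have hzero : ∏ l ∈ S, y l ^ p l = 0 := by
      apply Finset.prod_eq_zero hmS
      rw [hpm, hym]
      exact zero_pow (by omega)
    rw [hzero] at hR
    exact (Finset.prod_ne_zero_iff.mpr fun l hl => pow_ne_zero _ (hSne l hl)) hR.symm
  · simp only [Pi.zero_apply, Nat.cast_zero, zero_mul, Finset.sum_const_zero]
    have hsub : ({m, m'} : Finset (Fin n)) ⊆ S := by
      intro l hl
      rcases Finset.mem_insert.mp hl with rfl | hl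
      · exact hmS
      · rw [Finset.mem_singleton.mp hl]; exact hm'S
    rw [← Finset.sum_subset hsub ?_]
    · rw [Finset.sum_pair hmm', hpm, hpm', Int.toNat_of_nonneg hα.le, Int.toNat_of_nonneg hβ]
      exact hrel
    · intro l _ hl
      have h1 : l ≠ m := by rintro rfl; exact hl (Finset.mem_insert_self _ _)
      have h2 : l ≠ m' := by
        rintro rfl; exact hl (Finset.mem_insert_of_mem (Finset.mem_singleton_self _))
      rw [hp]
      simp [h1, h2]

/-- The hard direction of closedness: a point of the Zariski closure of the orbit lies
in the orbit, provided there are coordinates of both positive and negative weights. -/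
private lemma luna_closed [IsAlgClosed k] {n : ℕ} (d : Fin n → ℤ) (c : Fin n → k)
    (i j : Fin n) (hdi : d i < 0) (hdj : 0 < d j) (hci : c i ≠ 0) (hcj : c j ≠ 0)
    (y : Fin n → k)
    (hy : ∀ f : MvPolynomial (Fin n) k,
        (∀ z ∈ {y : Fin n → k | ∃ t : kˣ, ∀ i, y i = ((t ^ d i : kˣ) : k) * c i},
          MvPolynomial.eval z f = 0) → MvPolynomial.eval y f = 0) :
    ∃ t : kˣ, ∀ m, y m = ((t ^ d m : kˣ) : k) * c m := by
  classical
  set S : Finset (Fin n) := Finset.univ.filter (fun m => c m ≠ 0) with hS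
  have hmemS : ∀ m, m ∈ S ↔ c m ≠ 0 := by intro m; simp [hS]
  have hiS : i ∈ S := (hmemS i).mpr hci
  have hjS : j ∈ S := (hmemS j).mpr hcj
  -- coordinates outside the support vanish
  have hy0 : ∀ m, c m = 0 → y m = 0 := by
    intro m hm
    have := hy (X m) ?_
    · simpa using this
    · rintro z ⟨t, ht⟩; simp [ht m, hm]
  -- coordinates in the support of c are nonzero at y
  have hyne : ∀ m ∈ S, y m ≠ 0 := by
    intro m hmS
    rcases le_or_gt 0 (d m) with hdm | hdm
    · have hmi : m ≠ i := by rintro rfl; omega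
      exact luna_yne d c y hy S (fun l hl => (hmemS l).mp hl) m i hmS hiS hmi
        (-d i) (d m) (by omega) hdm (by ring)
    · have hmj : m ≠ j := by rintro rfl; omega
      exact luna_yne d c y hy S (fun l hl => (hmemS l).mp hl) m j hmS hjS hmj
        (d j) (-d m) hdj (by omega) (by ring)
  -- the ratio function
  set x : Fin n → k := fun m => y m / c m with hx
  have hxne : ∀ m ∈ S, x m ≠ 0 := fun m hm =>
    div_ne_zero (hyne m hm) ((hmemS m).mp hm)
  -- integral relations
  have hR : ∀ a : Fin n → ℤ, (∑ m ∈ S, a m * d m = 0) → ∏ m ∈ S, x m ^ a m = 1 := by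
    intro a ha
    have hsum : ∑ m ∈ S, (((a m).toNat : ℤ)) * d m = ∑ m ∈ S, (((-a m).toNat : ℤ)) * d m := by
      rw [← sub_eq_zero, ← Finset.sum_sub_distrib, ← ha]
      refine Finset.sum_congr rfl fun m _ => ?_
      have h : ((a m).toNat : ℤ) - ((-a m).toNat : ℤ) = a m := by omega
      rw [← sub_mul, h]
    have h1 := luna_R1 d c y hy S (fun m => (a m).toNat) (fun m => (-a m).toNat) hsum
    have hcP : (∏ m ∈ S, c m ^ (a m).toNat) ≠ 0 :=
      Finset.prod_ne_zero_iff.mpr fun l hl => pow_ne_zero _ ((hmemS l).mp hl)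
    have hyQ : (∏ m ∈ S, y m ^ (-a m).toNat) ≠ 0 :=
      Finset.prod_ne_zero_iff.mpr fun l hl => pow_ne_zero _ (hyne l hl)
    have hprod : ∏ m ∈ S, x m ^ a m
        = ((∏ m ∈ S, y m ^ (a m).toNat) * (∏ m ∈ S, c m ^ (-a m).toNat))
          / ((∏ m ∈ S, y m ^ (-a m).toNat) * (∏ m ∈ S, c m ^ (a m).toNat)) := by
      rw [← Finset.prod_mul_distrib, ← Finset.prod_mul_distrib, ← Finset.prod_div_distrib]
      refine Finset.prod_congr rfl fun m hm => ?_
      have hxm := hxne m hm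
      have hym := hyne m hm
      have hcm := (hmemS m).mp hm
      have h2 : x m ^ a m = x m ^ (((a m).toNat : ℤ)) / x m ^ (((-a m).toNat : ℤ)) := by
        rw [← zpow_sub₀ hxm]; congr 1; omega
      rw [h2, zpow_natCast, zpow_natCast, hx]
      simp only
      rw [div_pow, div_pow, div_div_div_eq]
      congr 1 <;> ring
    rw [hprod, div_eq_one_iff_eq (mul_ne_zero hyQ hcP)]
    calc (∏ m ∈ S, y m ^ (a m).toNat) * (∏ m ∈ S, c m ^ (-a m).toNat)
        = (∏ m ∈ S, c m ^ (-a m).toNat) * (∏ m ∈ S, y m ^ (a m).toNat) := by ring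
      _ = (∏ m ∈ S, c m ^ (a m).toNat) * ∏ m ∈ S, y m ^ (-a m).toNat := h1
      _ = (∏ m ∈ S, y m ^ (-a m).toNat) * (∏ m ∈ S, c m ^ (a m).toNat) := by ring
  -- Bezout
  have he0 : S.gcd d ≠ 0 := by
    intro hcon
    have := (Finset.gcd_eq_zero_iff).mp hcon j hjS
    omega
  have hepos : 0 < S.gcd d := lt_of_le_of_ne (luna_gcd_nonneg S d) (Ne.symm he0)
  obtain ⟨u, hu⟩ := luna_bezout S d
  set P : k := ∏ m ∈ S, x m ^ u m with hP
  have hPne : P ≠ 0 :=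
    Finset.prod_ne_zero_iff.mpr fun l hl => zpow_ne_zero _ (hxne l hl)
  obtain ⟨s, hs⟩ := IsAlgClosed.exists_pow_nat_eq P (n := (S.gcd d).toNat) (by omega)
  have hsne : s ≠ 0 := by
    intro hcon
    rw [hcon, zero_pow (by omega)] at hs
    exact hPne hs.symm
  have hse : s ^ (S.gcd d) = P := by
    rw [← hs, ← zpow_natCast s (S.gcd d).toNat]
    congr 1
    omega
  refine ⟨Units.mk0 s hsne, fun m => ?_⟩
  by_cases hm : c m = 0
  · rw [hy0 m hm, hm, mul_zero]
  · have hmS : m ∈ S := (hmemS m).mpr hm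
    have hval : ((Units.mk0 s hsne ^ d m : kˣ) : k) = s ^ d m := by
      rw [Units.val_zpow_eq_zpow_val]; simp
    rw [hval]
    suffices hsd : s ^ d m = x m by
      rw [hsd, hx]
      simp only
      rw [div_mul_cancel₀ _ hm]
    have hdvd : S.gcd d ∣ d m := Finset.gcd_dvd hmS
    set w : ℤ := d m / S.gcd d with hwdef
    have hw : S.gcd d * w = d m := Int.mul_ediv_cancel' hdvd
    have h1 : s ^ d m = P ^ w := by rw [← hw, zpow_mul, hse]
    have ha : ∑ l ∈ S, (u l * w - if l = m then 1 else 0) * d l = 0 := by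
      have hsplit : ∀ l, (u l * w - if l = m then (1:ℤ) else 0) * d l
          = w * (u l * d l) - (if l = m then d l else 0) := by
        intro l; split <;> ring
      rw [Finset.sum_congr rfl fun l _ => hsplit l, Finset.sum_sub_distrib, ← Finset.mul_sum,
        hu, Finset.sum_ite_eq' S m d, if_pos hmS]
      linarith [hw, mul_comm w (S.gcd d)]
    have h2 := hR _ ha
    have h3 : ∏ l ∈ S, x l ^ (u l * w - if l = m then (1:ℤ) else 0)
        = P ^ w / x m := by
      have hterm : ∀ l ∈ S, x l ^ (u l * w - if l = m then (1:ℤ) else 0)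
          = (x l ^ u l) ^ w / (if l = m then x l else 1) := by
        intro l hl
        rw [zpow_sub₀ (hxne l hl), zpow_mul]
        congr 1
        split <;> simp
      rw [Finset.prod_congr rfl hterm, Finset.prod_div_distrib,
        Finset.prod_ite_eq' S m (fun l => x l), if_pos hmS, ← luna_prod_zpow₀, ← hP]
    rw [h3] at h2
    rw [h1]
    exact (div_eq_one_iff_eq (hxne m hmS)).mp h2

/-- If all weights on the support of `c` are nonnegative and one is positive, the
origin-type limit point lies in the closure but not in the orbit, contradicting
closedness. -/
private lemma luna_limit [IsAlgClosed k] {n : ℕ} (d : Fin n → ℤ) (c : Fin n → k)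
    (hcd : ∀ m, c m ≠ 0 → 0 ≤ d m) (m0 : Fin n) (hc : c m0 ≠ 0) (hd : 0 < d m0)
    (hcl : ∀ y : Fin n → k,
        (∀ f : MvPolynomial (Fin n) k,
          (∀ z ∈ {y : Fin n → k | ∃ t : kˣ, ∀ i, y i = ((t ^ d i : kˣ) : k) * c i},
            MvPolynomial.eval z f = 0) → MvPolynomial.eval y f = 0) →
        y ∈ {y : Fin n → k | ∃ t : kˣ, ∀ i, y i = ((t ^ d i : kˣ) : k) * c i}) : False := by
  classical
  set y : Fin n → k := fun m => if 0 < d m then 0 else c m with hydef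
  have hmem := hcl y ?_
  · obtain ⟨t, ht⟩ := hmem
    have h0 : y m0 = 0 := by simp [hydef, hd]
    have h1 := ht m0
    rw [h0] at h1
    exact (mul_ne_zero (Units.ne_zero _) hc) h1.symm
  · intro f hf
    set g : Fin n → Polynomial k := fun m => Polynomial.C (c m) * Polynomial.X ^ (d m).toNat
      with hg
    set φ : Polynomial k := MvPolynomial.aeval g f with hφ
    have heval : ∀ v : k,
        Polynomial.eval v φ = MvPolynomial.eval (fun m => c m * v ^ (d m).toNat) f := by
      intro v
      have h1 : Polynomial.aeval v φ
          = MvPolynomial.aeval (fun m => Polynomial.aeval v (g m)) f := by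
        rw [hφ, ← MvPolynomial.comp_aeval]; rfl
      have h2 : ∀ m, Polynomial.aeval v (g m) = c m * v ^ (d m).toNat := by
        intro m; simp [hg]
      have h3 : Polynomial.aeval v φ = Polynomial.eval v φ := by
        rw [Polynomial.aeval_def, Polynomial.eval, Algebra.algebraMap_self]
      have h4 : MvPolynomial.aeval (fun m => Polynomial.aeval v (g m)) f
          = MvPolynomial.eval (fun m => c m * v ^ (d m).toNat) f := by
        simp only [h2]
        rw [← MvPolynomial.coe_aeval_eq_eval]; rfl
      rw [← h3, h1, h4]
    have hroots : ∀ v : k, v ≠ 0 → Polynomial.IsRoot φ v := by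
      intro v hv
      rw [Polynomial.IsRoot, heval v]
      apply hf
      refine ⟨Units.mk0 v hv, fun m => ?_⟩
      show c m * v ^ (d m).toNat = ((Units.mk0 v hv ^ d m : kˣ) : k) * c m
      by_cases hcm : c m = 0
      · simp [hcm]
      · have hdm := hcd m hcm
        rw [Units.val_zpow_eq_zpow_val, Units.val_mk0, mul_comm]
        congr 1
        rw [← zpow_natCast v (d m).toNat, Int.toNat_of_nonneg hdm]
    have hφ0 : φ = 0 := by
      apply Polynomial.eq_zero_of_infinite_isRoot
      have hinf : ({v : k | v ≠ 0}).Infinite := by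
        have h5 := (Set.finite_singleton (0 : k)).infinite_compl
        have h6 : ({(0 : k)}ᶜ : Set k) = {v : k | v ≠ 0} := by ext v; simp
        rwa [h6] at h5
      exact hinf.mono (fun v hv => hroots v hv)
    have harg : y = fun m => c m * (0 : k) ^ (d m).toNat := by
      funext m
      show y m = c m * (0 : k) ^ (d m).toNat
      by_cases hdm : 0 < d m
      · have hne : (d m).toNat ≠ 0 := by omega
        simp [hydef, hdm, zero_pow hne]
      · have hz : (d m).toNat = 0 := by omega
        simp [hydef, hdm, hz]
    have hfin : MvPolynomial.eval y f = Polynomial.eval 0 φ := by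
      rw [heval 0, harg]
    rw [hfin, hφ0, Polynomial.eval_zero]

end LunaAux

/-- Hilbert–Mumford criterion for a 1-dimensional torus: for the action of `k^×` on
`k^n` with weights `d_1, …, d_n`, a point `c` is properly stable (its orbit is Zariski
closed and its stabilizer is finite) if and only if there exist coordinates `i, j` with
`d_i < 0`, `d_j > 0`, `c_i ≠ 0` and `c_j ≠ 0`. -/
theorem luna_stmt3 (k : Type*) [Field k] [IsAlgClosed k] [CharZero k]
    (n : ℕ) (hn : 1 ≤ n) (d : Fin n → ℤ) (c : Fin n → k) :
    (((∀ y : Fin n → k,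
        (∀ f : MvPolynomial (Fin n) k,
          (∀ z ∈ {y : Fin n → k | ∃ t : kˣ, ∀ i, y i = ((t ^ d i : kˣ) : k) * c i},
            MvPolynomial.eval z f = 0) →
          MvPolynomial.eval y f = 0) →
        y ∈ {y : Fin n → k | ∃ t : kˣ, ∀ i, y i = ((t ^ d i : kˣ) : k) * c i}) ∧
      Set.Finite {t : kˣ | ∀ i, ((t ^ d i : kˣ) : k) * c i = c i})
    ↔ ∃ i j : Fin n, d i < 0 ∧ 0 < d j ∧ c i ≠ 0 ∧ c j ≠ 0) := by
  constructor
  · rintro ⟨hcl, hstab⟩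
    by_contra hne
    push_neg at hne
    have hm0 : ∃ m, c m ≠ 0 ∧ d m ≠ 0 := by
      by_contra h
      push_neg at h
      have huniv : {t : kˣ | ∀ i, ((t ^ d i : kˣ) : k) * c i = c i} = Set.univ := by
        ext t
        simp only [Set.mem_setOf_eq, Set.mem_univ, iff_true]
        intro m
        by_cases hc : c m = 0
        · rw [hc, mul_zero]
        · rw [h m hc]; simp
      rw [huniv, Set.finite_univ_iff] at hstab
      have hfk : Finite k := by
        have h1 : ({x : k | x ≠ 0}).Finite := by
          apply (Set.finite_range (Units.val : kˣ → k)).subset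
          intro x hx
          exact ⟨Units.mk0 x hx, rfl⟩
        have h2 : (Set.univ : Set k).Finite := by
          apply (h1.union (Set.finite_singleton 0)).subset
          intro x _
          by_cases hx : x = 0 <;> simp [hx]
        rwa [Set.finite_univ_iff] at h2
      haveI := hfk
      exact not_finite k
    obtain ⟨m0, hcm0, hdm0⟩ := hm0
    have hinvpow : ∀ (t : kˣ) (m : ℤ), (t⁻¹ : kˣ) ^ (-m) = t ^ m := by
      intro t m; rw [inv_zpow, zpow_neg, inv_inv]
    rcases lt_or_gt_of_ne hdm0 with h | h
    · -- all nonzero coordinates have nonpositive weight; use weights -d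
      have hOeq : {y : Fin n → k | ∃ t : kˣ, ∀ i, y i = ((t ^ (-d) i : kˣ) : k) * c i}
          = {y : Fin n → k | ∃ t : kˣ, ∀ i, y i = ((t ^ d i : kˣ) : k) * c i} := by
        ext z
        simp only [Set.mem_setOf_eq, Pi.neg_apply]
        constructor
        · rintro ⟨t, ht⟩
          exact ⟨t⁻¹, fun m => by rw [ht m, ← hinvpow t (-(d m)), neg_neg]⟩
        · rintro ⟨t, ht⟩
          exact ⟨t⁻¹, fun m => by rw [ht m, ← hinvpow t (d m)]⟩
      apply luna_limit (-d) c ?_ m0 hcm0 (by simp only [Pi.neg_apply]; omega)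
      · intro y hyy
        rw [hOeq]
        apply hcl y
        intro f hf
        apply hyy f
        rw [hOeq]
        exact hf
      · intro m hcm
        simp only [Pi.neg_apply]
        by_contra hlt
        push_neg at hlt
        exact hcm (hne m0 m h (by omega) hcm0)
    · apply luna_limit d c ?_ m0 hcm0 h hcl
      intro m hcm
      by_contra hlt
      push_neg at hlt
      exact hcm0 (hne m m0 hlt h hcm)
  · rintro ⟨i, j, hdi, hdj, hci, hcj⟩
    refine ⟨?_, ?_⟩
    · intro y hyy
      exact luna_closed d c i j hdi hdj hci hcj y hyy
    · have hfin : ({x : k | x ^ (d j).toNat = 1}).Finite := by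
        have hp : (Polynomial.X ^ (d j).toNat - Polynomial.C 1 : Polynomial k) ≠ 0 := by
          intro hcon
          have h0 := congrArg (Polynomial.eval 0) hcon
          simp [zero_pow (show (d j).toNat ≠ 0 by omega)] at h0
        apply (Polynomial.finite_setOf_isRoot hp).subset
        intro x hx
        simp only [Set.mem_setOf_eq, Polynomial.IsRoot, Polynomial.eval_sub,
          Polynomial.eval_pow, Polynomial.eval_X, Polynomial.eval_C, sub_eq_zero]
        exact hx
      have hfin2 : ({t : kˣ | ((t : k)) ^ (d j).toNat = 1}).Finite :=
        Set.Finite.preimage (Function.Injective.injOn Units.val_injective) hfin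
      apply hfin2.subset
      intro t ht
      have h1 := ht j
      have h2 : ((t ^ d j : kˣ) : k) = 1 :=
        mul_right_cancel₀ hcj (h1.trans (one_mul (c j)).symm)
      show ((t : k)) ^ (d j).toNat = 1
      rw [← zpow_natCast (t : k), Int.toNat_of_nonneg hdj.le,
        ← Units.val_zpow_eq_zpow_val, h2]
end

section
/- Let k be a field of characteristic zero, G a finite group, and W a finite-dimensional k-vector space equipped with a k-linear action of G. Let B : W × W → k be a G-invariant bilinear form (B(g·v, g·w) = B(v,w) for all g, v, w) that is alternating (B(v,v) = 0 for all v) and nondegenerate (for every nonzero a ∈ W there exists w with B(a,w) ≠ 0). Then for every subgroup H of G, the fixed subspace W^H = {w ∈ W : h·w = w for all h ∈ H} has even dimension over k. -/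
/-- The subspace of vectors fixed by every element of a subgroup `H` of `G`, for a
representation `ρ` of `G` on `W`. -/
def fixedSubmodule {k G W : Type*} [Field k] [AddCommGroup W] [Module k W] [Group G]
    (ρ : Representation k G W) (H : Subgroup G) : Submodule k W where
  carrier := {w | ∀ h ∈ H, ρ h w = w}
  add_mem' := fun ha hb h hh => by simp only [map_add, ha h hh, hb h hh]
  zero_mem' := fun h hh => by simp
  smul_mem' := fun c w hw h hh => by simp only [map_smul, hw h hh]


open LinearMap Matrix

/-- An alternating nondegenerate bilinear form on a finite-dimensional space over a
field of characteristic zero forces even dimension. -/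
lemma even_finrank_of_alt_nondeg {k V : Type*} [Field k] [CharZero k]
    [AddCommGroup V] [Module k V] [FiniteDimensional k V]
    (B : LinearMap.BilinForm k V) (halt : B.IsAlt) (hnd : B.Nondegenerate) :
    Even (Module.finrank k V) := by
  let b := Module.finBasis k V
  set n := Module.finrank k V
  have hdet : (BilinForm.toMatrix b B).det ≠ 0 :=
    (BilinForm.nondegenerate_iff_det_ne_zero b).mp hnd
  have hskew : (BilinForm.toMatrix b B)ᵀ = -(BilinForm.toMatrix b B) := by
    ext i j
    simp only [Matrix.transpose_apply, Matrix.neg_apply, BilinForm.toMatrix_apply]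
    erw [LinearMap.BilinForm.toMatrix_apply, LinearMap.BilinForm.toMatrix_apply]
    exact (halt.neg_eq (b i) (b j)).symm
  have h1 : (BilinForm.toMatrix b B).det = (-1 : k) ^ n * (BilinForm.toMatrix b B).det := by
    conv_lhs => rw [← Matrix.det_transpose, hskew, Matrix.det_neg]
    simp [n]
  have h2 : (-1 : k) ^ n = 1 := by
    have := mul_right_cancel₀ hdet (h1.symm.trans (one_mul _).symm)
    linear_combination this
  rcases Nat.even_or_odd n with he | ho
  · exact he
  · rw [ho.neg_one_pow] at h2
    exact absurd h2 (by norm_num)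

/-- If a finite group `G` acts linearly on a finite-dimensional vector space `W` over a
field of characteristic zero, preserving a nondegenerate alternating bilinear form,
then for every subgroup `H` of `G` the fixed subspace `W^H` has even dimension. -/
theorem luna_stmt5 (k W G : Type*) [Field k] [CharZero k]
    [AddCommGroup W] [Module k W] [FiniteDimensional k W]
    [Group G] [Finite G] (ρ : Representation k G W)
    (B : LinearMap.BilinForm k W)
    (hGinv : ∀ (g : G) (v w : W), B (ρ g v) (ρ g w) = B v w)
    (halt : ∀ v : W, B v v = 0)
    (hnd : ∀ a : W, a ≠ 0 → ∃ w : W, B a w ≠ 0) :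
    ∀ H : Subgroup G, Even (Module.finrank k (fixedSubmodule ρ H)) := by
  intro H
  haveI : Fintype H := Fintype.ofFinite H
  set S := fixedSubmodule ρ H with hS
  apply even_finrank_of_alt_nondeg (B.restrict S)
  · intro v
    exact halt v
  · -- nondegeneracy of the restriction
    refine (LinearMap.IsRefl.nondegenerate_iff_separatingLeft
      (LinearMap.IsAlt.isRefl (B := B.restrict S) (fun v => halt v))).mpr ?_
    intro a ha
    by_contra hne
    have hav : (a : W) ≠ 0 := fun h => hne (Subtype.ext h)
    obtain ⟨w, hw⟩ := hnd a hav
    -- the averaged vector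
    set c : k := (Fintype.card H : k)⁻¹ with hc
    set pw : W := c • ∑ h : H, ρ (h : G) w with hpw
    have hcard : (Fintype.card H : k) ≠ 0 := Nat.cast_ne_zero.mpr Fintype.card_ne_zero
    -- pw is fixed by H
    have hmem : pw ∈ S := by
      intro h' hh'
      have : ρ h' pw = c • ∑ h : H, ρ (h' * (h : G)) w := by
        rw [hpw, _root_.map_smul, map_sum]
        congr 1
        refine Finset.sum_congr rfl fun h _ => ?_
        rw [_root_.map_mul]
        rfl
      rw [this, hpw]
      congr 1
      exact Fintype.sum_equiv (Equiv.mulLeft (⟨h', hh'⟩ : H)) _ _ (fun h => by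
        simp [Equiv.mulLeft])
    -- B a pw = B a w
    have hfix : ∀ h : H, ρ (h : G) (a : W) = (a : W) := fun h => a.2 h h.2
    have hBa : B (a : W) pw = B (a : W) w := by
      rw [hpw, _root_.map_smul, map_sum]
      have : ∀ h : H, B (a : W) (ρ (h : G) w) = B (a : W) w := fun h => by
        conv_lhs => rw [← hfix h]
        exact hGinv h a w
      rw [Finset.sum_congr rfl fun h _ => this h, Finset.sum_const, Finset.card_univ,
        smul_eq_mul, nsmul_eq_mul, hc]
      field_simp
    have := ha ⟨pw, hmem⟩
    rw [LinearMap.BilinForm.restrict_apply] at this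
    exact hw (hBa ▸ this)
end

section
/- Let k be a field, W a k-vector space, and G a group acting on W by k-linear automorphisms; let G act diagonally on r-tuples. Let r ≥ 1, 1 ≤ d ≤ r, and let w = (w_1,…,w_r) ∈ W^r be such that w_j lies in the k-linear span of {w_1,…,w_d} for every j with d < j ≤ r. Then there exists a G-invariant k-linear subspace W_0 of W^r such that w ∈ W_0 and the k-linear projection p : W^r → W^d onto the first d coordinates restricts to a k-linear isomorphism from W_0 onto W^d. -/
/-!
Choose coefficients `c j i` with `w j = ∑ i, c j i • w i`, taking `c j = Pi.single j 1` for
`j < d`. The matrix `c` defines a linear map `W^d → W^r`, `u ↦ (∑ i, c j i • u i)_j`, which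
commutes with every componentwise linear endomorphism of `W`, sends `(w_1, …, w_d)` to `w`, and
is a section of the projection onto the first `d` coordinates. Its range is the required `W₀`.
-/

open Function Submodule

section MatrixPiMap

variable {k W ι κ : Type*} [CommSemiring k] [AddCommMonoid W] [Module k W] [Fintype κ]

def matrixPiMap (c : ι → κ → k) : (κ → W) →ₗ[k] (ι → W) :=
  LinearMap.pi fun j => (Fintype.bilinearCombination k k).flip (c j)

theorem matrixPiMap_apply (c : ι → κ → k) (u : κ → W) (j : ι) :
    matrixPiMap c u j = ∑ i, c j i • u i :=
  rfl

theorem matrixPiMap_map (c : ι → κ → k) (φ : W →ₗ[k] W) (u : κ → W) :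
    matrixPiMap c (fun i => φ (u i)) = fun j => φ (matrixPiMap c u j) := by
  ext j
  simp [matrixPiMap_apply, map_sum]

theorem map_mem_range_matrixPiMap (c : ι → κ → k) (φ : W →ₗ[k] W) {x : ι → W}
    (hx : x ∈ LinearMap.range (matrixPiMap c)) :
    (fun j => φ (x j)) ∈ LinearMap.range (matrixPiMap c) := by
  obtain ⟨u, rfl⟩ := hx
  exact ⟨fun i => φ (u i), matrixPiMap_map c φ u⟩

theorem leftInverse_matrixPiMap [DecidableEq κ] {c : ι → κ → k} {e : κ → ι}
    (hc : ∀ i, c (e i) = Pi.single i 1) :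
    LeftInverse (fun x : ι → W => x ∘ e) (matrixPiMap c) := fun u => by
  ext i
  simp only [comp_apply, matrixPiMap_apply, hc]
  exact (Fintype.linearCombination_apply_single k u i 1).trans (one_smul k _)

theorem exists_coeffs_of_mem_span [DecidableEq κ] {e : κ → ι} (he : Injective e) {w : ι → W}
    (hw : ∀ j, w j ∈ span k (Set.range (w ∘ e))) :
    ∃ c : ι → κ → k, (∀ i, c (e i) = Pi.single i 1) ∧ ∀ j, ∑ i, c j i • w (e i) = w j := by
  choose c₀ hc₀ using fun j => (mem_span_range_iff_exists_fun k).1 (hw j)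
  refine ⟨extend e (fun i => Pi.single i 1) c₀, fun i => he.extend_apply _ _ i, fun j => ?_⟩
  by_cases hj : ∃ i, e i = j
  · obtain ⟨i, rfl⟩ := hj
    rw [he.extend_apply]
    exact (Fintype.linearCombination_apply_single k (w ∘ e) i 1).trans (one_smul k _)
  · rw [extend_apply' _ _ _ hj]
    exact hc₀ j

theorem exists_submodule_pi_equiv_comp {e : κ → ι} (he : Injective e) {w : ι → W}
    (hw : ∀ j, w j ∈ span k (Set.range (w ∘ e))) :
    ∃ W₀ : Submodule k (ι → W), (∀ φ : W →ₗ[k] W, ∀ x ∈ W₀, (fun j => φ (x j)) ∈ W₀) ∧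
      w ∈ W₀ ∧ ∃ f : W₀ ≃ₗ[k] (κ → W), ∀ x : W₀, f x = (x : ι → W) ∘ e := by
  classical
  obtain ⟨c, hc_single, hc_sum⟩ := exists_coeffs_of_mem_span he hw
  refine ⟨LinearMap.range (matrixPiMap c), fun φ _ => map_mem_range_matrixPiMap c φ,
    ⟨w ∘ e, funext hc_sum⟩, ?_⟩
  exact ⟨(LinearEquiv.ofLeftInverse (leftInverse_matrixPiMap hc_single)).symm, fun _ => rfl⟩

end MatrixPiMap

theorem luna_stmt8_general (k W G : Type*) [Field k] [AddCommGroup W] [Module k W] [Group G]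
    (ρ : Representation k G W) (r d : ℕ) (hdr : d ≤ r)
    (w : Fin r → W)
    (hspan : ∀ j : Fin r, d ≤ (j : ℕ) →
      w j ∈ Submodule.span k {x : W | ∃ i : Fin r, (i : ℕ) < d ∧ w i = x}) :
    ∃ W₀ : Submodule k (Fin r → W),
      (∀ g : G, ∀ x ∈ W₀, (fun i : Fin r => ρ g (x i)) ∈ W₀) ∧
      w ∈ W₀ ∧
      ∃ e : W₀ ≃ₗ[k] (Fin d → W),
        ∀ x : W₀, e x = fun i : Fin d => (x : Fin r → W) (Fin.castLE hdr i) := by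
  have hw : ∀ j, w j ∈ span k (Set.range (w ∘ Fin.castLE hdr)) := by
    intro j
    by_cases hj : (j : ℕ) < d
    · exact subset_span ⟨⟨j, hj⟩, rfl⟩
    · refine span_mono ?_ (hspan j (not_lt.1 hj))
      rintro _ ⟨i, hi, rfl⟩
      exact ⟨⟨i, hi⟩, rfl⟩
  obtain ⟨W₀, hinv, hw₀, f, hf⟩ := exists_submodule_pi_equiv_comp (Fin.castLE_injective hdr) hw
  exact ⟨W₀, fun g => hinv (ρ g), hw₀, f, hf⟩

/-- (Lemma 4.8(b).) If `w = (w_1, …, w_r) ∈ W^r` is a tuple such that `w_j` lies in the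
span of `w_1, …, w_d` for every `j > d`, then there is a `G`-invariant subspace
`W₀ ⊆ W^r` containing `w` such that the projection onto the first `d` coordinates
restricts to a linear isomorphism `W₀ ≃ W^d`. -/
theorem luna_stmt8 (k W G : Type*) [Field k] [AddCommGroup W] [Module k W] [Group G]
    (ρ : Representation k G W) (r d : ℕ) (hr : 1 ≤ r) (hd : 1 ≤ d) (hdr : d ≤ r)
    (w : Fin r → W)
    (hspan : ∀ j : Fin r, d ≤ (j : ℕ) →
      w j ∈ Submodule.span k {x : W | ∃ i : Fin r, (i : ℕ) < d ∧ w i = x}) :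
    ∃ W₀ : Submodule k (Fin r → W),
      (∀ g : G, ∀ x ∈ W₀, (fun i : Fin r => ρ g (x i)) ∈ W₀) ∧
      w ∈ W₀ ∧
      ∃ e : W₀ ≃ₗ[k] (Fin d → W),
        ∀ x : W₀, e x = fun i : Fin d => (x : Fin r → W) (Fin.castLE hdr i) :=
  luna_stmt8_general k W G ρ r d hdr w hspan
end

section
/- Fix n ≥ 1. Then the relation ⪯ on RT_n is antisymmetric: if τ, ν ∈ RT_n satisfy τ ⪯ ν and ν ⪯ τ, then τ = ν. (Hence ⪯ is a partial order on RT_n.) -/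
/-!
Every elementary refinement strictly decreases `∑ (d² e + 1)` over the pairs `(d, e)`, as long
as all multiplicities `e` are positive (a property refinements preserve): splitting `d = a + b`
lowers `d² e + 1` to `a² e + 1 + b² e + 1`, a loss of `2 a b e - 1 ≥ 1`, and merging two pairs
with the same `d` keeps the `d²`-terms and loses one `+ 1`. Hence a refinement chain from `ν`
back to `ν` must be empty, and `τ ⪯ ν ⪯ τ` forces `τ = ν`.
-/

/-- `IsRT n τ` : `τ` is a representation type of total dimension `n`, i.e. a finite
multiset of pairs `(d, e)` of positive integers with `∑ d·e = n`. -/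
def IsRT (n : ℕ) (τ : Multiset (ℕ × ℕ)) : Prop :=
  (∀ p ∈ τ, 0 < p.1 ∧ 0 < p.2) ∧ (τ.map fun p => p.1 * p.2).sum = n

/-- `ElemRef τ τ'` : `τ'` is obtained from `τ` by a single elementary refinement:
either (1) replacing one pair `(d, e)` by `(a, e), (b, e)` with `a, b ≥ 1`, `a + b = d`,
or (2) replacing two pairs `(d, e), (d, e')` with the same first coordinate by the
single pair `(d, e + e')`. -/
def ElemRef (τ τ' : Multiset (ℕ × ℕ)) : Prop :=
  (∃ (σ : Multiset (ℕ × ℕ)) (d e a b : ℕ), 0 < a ∧ 0 < b ∧ a + b = d ∧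
      τ = (d, e) ::ₘ σ ∧ τ' = (a, e) ::ₘ (b, e) ::ₘ σ) ∨
  (∃ (σ : Multiset (ℕ × ℕ)) (d e e' : ℕ),
      τ = (d, e) ::ₘ (d, e') ::ₘ σ ∧ τ' = (d, e + e') ::ₘ σ)

/-- `RTle μ τ` (i.e. `μ ⪯ τ`) : `μ` is obtained from `τ` by a (possibly empty) finite
sequence of elementary refinements; the reflexive–transitive closure of `ElemRef`. -/
def RTle (μ τ : Multiset (ℕ × ℕ)) : Prop :=
  Relation.ReflTransGen ElemRef τ μ

namespace ElemRef

def weight (σ : Multiset (ℕ × ℕ)) : ℕ :=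
  (σ.map fun p => p.1 ^ 2 * p.2 + 1).sum

variable {τ τ' : Multiset (ℕ × ℕ)}

lemma snd_pos (h : ElemRef τ τ') (hτ : ∀ p ∈ τ, 0 < p.2) : ∀ p ∈ τ', 0 < p.2 := by
  rcases h with ⟨σ, d, e, a, b, -, -, -, rfl, rfl⟩ | ⟨σ, d, e, e', rfl, rfl⟩
  · simp only [Multiset.mem_cons, forall_eq_or_imp] at hτ ⊢
    exact ⟨hτ.1, hτ.1, hτ.2⟩
  · simp only [Multiset.mem_cons, forall_eq_or_imp] at hτ ⊢
    exact ⟨by omega, hτ.2.2⟩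

lemma weight_lt (h : ElemRef τ τ') (hτ : ∀ p ∈ τ, 0 < p.2) : weight τ' < weight τ := by
  rcases h with ⟨σ, d, e, a, b, ha, hb, rfl, rfl, rfl⟩ | ⟨σ, d, e, e', rfl, rfl⟩
  · have he : 0 < e := hτ (a + b, e) (Multiset.mem_cons_self _ _)
    simp only [weight, Multiset.map_cons, Multiset.sum_cons]
    nlinarith [mul_pos (mul_pos ha hb) he]
  · simp only [weight, Multiset.map_cons, Multiset.sum_cons]
    nlinarith

lemma weight_lt_of_transGen (h : Relation.TransGen ElemRef τ τ') (hτ : ∀ p ∈ τ, 0 < p.2) :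
    weight τ' < weight τ := by
  induction h using Relation.TransGen.head_induction_on with
  | single h => exact h.weight_lt hτ
  | head h _ ih => exact (ih (h.snd_pos hτ)).trans (h.weight_lt hτ)

end ElemRef

theorem luna_stmt12_general (n : ℕ) (τ ν : Multiset (ℕ × ℕ))
    (hν : IsRT n ν) (h1 : RTle τ ν) (h2 : RTle ν τ) : τ = ν := by
  rcases Relation.reflTransGen_iff_eq_or_transGen.mp h1 with h | hντ
  · exact h
  · have hνν := hντ.trans_left h2
    exact absurd (ElemRef.weight_lt_of_transGen hνν fun p hp => (hν.1 p hp).2) (lt_irrefl _)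

/-- The refinement relation `⪯` on representation types in `RT_n` is antisymmetric
(hence a partial order). -/
theorem luna_stmt12 (n : ℕ) (hn : 1 ≤ n) (τ ν : Multiset (ℕ × ℕ))
    (hτ : IsRT n τ) (hν : IsRT n ν) (h1 : RTle τ ν) (h2 : RTle ν τ) : τ = ν :=
  luna_stmt12_general n τ ν hν h1 h2
end

section
/- Fix n ≥ 1 and let α be an automorphism of RT_n as a partially ordered set, i.e. a bijection α : RT_n → RT_n such that τ ⪯ ν if and only if α(τ) ⪯ α(ν), for all τ, ν ∈ RT_n. If α([(1,1)] ⊎ μ) = [(1,1)] ⊎ μ for every μ ∈ RT_{n−1} (where ⊎ denotes adjoining the pair (1,1) to the multiset μ), then α is the identity map on RT_n. -/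
open Multiset Relation

theorem Relation.ReflTransGen.eq_or_rel_or_add_two_le {β : Type*} {r : β → β → Prop}
    {f : β → ℕ} (hf : ∀ a b, r a b → f b = f a + 1) {a b : β} (h : ReflTransGen r a b) :
    a = b ∨ r a b ∨ f a + 2 ≤ f b := by
  induction h using ReflTransGen.head_induction_on with
  | refl => exact .inl rfl
  | head hac _ ih =>
    have hc := hf _ _ hac
    rcases ih with rfl | hcb | hle
    · exact .inr (.inl hac)
    · exact .inr (.inr (by have := hf _ _ hcb; omega))
    · exact .inr (.inr (by omega))

theorem apply_eq_self_of_forall_rel_iff {β : Type*} {X : Set β} {S : β → Prop}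
    {r : β → β → Prop} {α : β → β} {τ : β}
    (hmaps : Set.MapsTo α X X) (hinj : Set.InjOn α X)
    (hord : ∀ a ∈ X, ∀ b ∈ X, r a b ↔ r (α a) (α b))
    (hS : ∀ σ ∈ X, S σ → α σ = σ) (hτ : τ ∈ X)
    (hdet : ∀ ν ∈ X, ¬S ν → (∀ σ ∈ X, S σ → (r σ τ ↔ r σ ν)) →
      (∀ σ ∈ X, S σ → (r τ σ ↔ r ν σ)) → τ = ν) :
    α τ = τ := by
  have hατ := hmaps hτ
  by_cases h : S (α τ)
  · exact hinj hατ hτ (hS _ hατ h)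
  refine (hdet _ hατ h (fun σ hσ hσS => ?_) (fun σ hσ hσS => ?_)).symm
  · rw [hord σ hσ τ hτ, hS σ hσ hσS]
  · rw [hord τ hτ σ hσ, hS σ hσ hσS]

def fstSum (τ : Multiset (ℕ × ℕ)) : ℕ := (τ.map Prod.fst).sum

def SplitStep (τ τ' : Multiset (ℕ × ℕ)) : Prop :=
  ∃ (σ : Multiset (ℕ × ℕ)) (a b e : ℕ), τ = (a + b, e) ::ₘ σ ∧ τ' = (a, e) ::ₘ (b, e) ::ₘ σ

def splitOne (τ : Multiset (ℕ × ℕ)) (d e : ℕ) : Multiset (ℕ × ℕ) :=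
  (1, e) ::ₘ (d - 1, e) ::ₘ τ.erase (d, e)

section

variable {n : ℕ} {τ ν ρ σ : Multiset (ℕ × ℕ)} {d e : ℕ}

theorem IsRT.erase {p : ℕ × ℕ} (hσ : IsRT n σ) (hp : p ∈ σ) :
    IsRT (n - p.1 * p.2) (σ.erase p) := by
  refine ⟨fun q hq => hσ.1 q (mem_of_mem_erase hq), ?_⟩
  rw [← hσ.2, ← sum_map_erase hp]
  omega

theorem IsRT.eq_zero_iff (hτ : IsRT n τ) : τ = 0 ↔ n = 0 := by
  refine ⟨fun h => by simpa [h] using hτ.2.symm, fun hn => ?_⟩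
  refine eq_zero_of_forall_notMem fun p hp => ?_
  have hpos := hτ.1 p hp
  have hle : p.1 * p.2 ≤ n := hτ.2 ▸ le_sum_of_mem (mem_map_of_mem (fun p : ℕ × ℕ => p.1 * p.2) hp)
  have := Nat.mul_pos hpos.1 hpos.2
  omega

theorem IsRT.two_le_of_mem (hτ : IsRT n τ) (hτ1 : (1, e) ∉ τ) (hd : (d, e) ∈ τ) : 2 ≤ d := by
  have := (hτ.1 _ hd).1
  by_contra h
  obtain rfl : d = 1 := by omega
  exact hτ1 hd

theorem IsRT.of_elemRef (hτ : IsRT n τ) (h : ElemRef τ ρ) : IsRT n ρ := by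
  obtain ⟨hpos, hsum⟩ := hτ
  rcases h with ⟨θ, d, e, a, b, ha, hb, rfl, rfl, rfl⟩ | ⟨θ, d, e, e', rfl, rfl⟩
  · have he := (hpos _ (mem_cons_self _ _)).2
    refine ⟨fun p hp => ?_, by simp only [map_cons, sum_cons] at hsum ⊢; rw [← hsum]; ring⟩
    rcases mem_cons.1 hp with rfl | hp
    · exact ⟨ha, he⟩
    rcases mem_cons.1 hp with rfl | hp
    · exact ⟨hb, he⟩
    · exact hpos p (mem_cons_of_mem hp)
  · have hde := hpos _ (mem_cons_self _ _)
    refine ⟨fun p hp => ?_, by simp only [map_cons, sum_cons] at hsum ⊢; rw [← hsum]; ring⟩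
    rcases mem_cons.1 hp with rfl | hp
    · exact ⟨hde.1, by omega⟩
    · exact hpos p (mem_cons_of_mem (mem_cons_of_mem hp))

theorem IsRT.of_rtle (hτ : IsRT n τ) (h : RTle σ τ) : IsRT n σ := by
  induction h using ReflTransGen.head_induction_on generalizing n with
  | refl => exact hτ
  | head hstep _ ih => exact ih (hτ.of_elemRef hstep)

theorem ElemRef.exists_snd_eq_one (h : ElemRef τ ρ) (hρ : ∃ p ∈ ρ, p.2 = 1) :
    ∃ p ∈ τ, p.2 = 1 := by
  obtain ⟨p, hp, hp1⟩ := hρ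
  rcases h with ⟨θ, d, e, a, b, -, -, -, rfl, rfl⟩ | ⟨θ, d, e, e', rfl, rfl⟩
  · rcases mem_cons.1 hp with rfl | hp
    · exact ⟨(d, e), mem_cons_self _ _, hp1⟩
    rcases mem_cons.1 hp with rfl | hp
    · exact ⟨(d, e), mem_cons_self _ _, hp1⟩
    · exact ⟨p, mem_cons_of_mem hp, hp1⟩
  · rcases mem_cons.1 hp with rfl | hp
    · obtain he | he' : e = 1 ∨ e' = 1 := by simp only at hp1; omega
      · exact ⟨(d, e), mem_cons_self _ _, he⟩
      · exact ⟨(d, e'), mem_cons_of_mem (mem_cons_self _ _), he'⟩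
    · exact ⟨p, mem_cons_of_mem (mem_cons_of_mem hp), hp1⟩

theorem exists_snd_eq_one_of_rtle (h : RTle σ τ) (hσ : ∃ p ∈ σ, p.2 = 1) :
    ∃ p ∈ τ, p.2 = 1 := by
  induction h using ReflTransGen.head_induction_on with
  | refl => exact hσ
  | head hstep _ ih => exact hstep.exists_snd_eq_one ih

theorem fstSum_cons (p : ℕ × ℕ) (τ : Multiset (ℕ × ℕ)) : fstSum (p ::ₘ τ) = p.1 + fstSum τ := by
  simp [fstSum]

theorem ElemRef.fstSum_le (h : ElemRef τ ρ) : fstSum ρ ≤ fstSum τ := by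
  rcases h with ⟨θ, d, e, a, b, -, -, rfl, rfl, rfl⟩ | ⟨θ, d, e, e', rfl, rfl⟩
  · simp only [fstSum_cons]; omega
  · simp only [fstSum_cons]; omega

theorem fstSum_le_of_rtle (h : RTle σ τ) : fstSum σ ≤ fstSum τ := by
  induction h using ReflTransGen.head_induction_on with
  | refl => exact le_rfl
  | head hstep _ ih => exact ih.trans hstep.fstSum_le

/-- A merge lowers `fstSum` by the merged first coordinate, which is positive. -/
theorem ElemRef.splitStep_of_fstSum_eq (hτ : IsRT n τ) (h : ElemRef τ ρ)
    (hsum : fstSum ρ = fstSum τ) : SplitStep τ ρ := by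
  rcases h with ⟨θ, d, e, a, b, -, -, rfl, rfl, rfl⟩ | ⟨θ, d, e, e', rfl, rfl⟩
  · exact ⟨θ, a, b, e, rfl, rfl⟩
  · have := (hτ.1 _ (mem_cons_self _ _)).1
    simp only [fstSum_cons] at hsum
    omega

theorem splitSteps_of_rtle (hτ : IsRT n τ) (h : RTle σ τ) (hsum : fstSum σ = fstSum τ) :
    ReflTransGen SplitStep τ σ := by
  induction h using ReflTransGen.head_induction_on generalizing n with
  | refl => exact .refl
  | @head τ ρ hstep hrest ih =>
    have hρ := hstep.fstSum_le
    have hσ := fstSum_le_of_rtle hrest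
    exact .head (hstep.splitStep_of_fstSum_eq hτ (by omega)) (ih (hτ.of_elemRef hstep) (by omega))

theorem SplitStep.card_eq (h : SplitStep τ ρ) : card ρ = card τ + 1 := by
  obtain ⟨θ, a, b, e, rfl, rfl⟩ := h
  simp

theorem eq_or_splitStep_or_card_add_two_le (hτ : IsRT n τ) (h : RTle σ τ)
    (hsum : fstSum σ = fstSum τ) : τ = σ ∨ SplitStep τ σ ∨ card τ + 2 ≤ card σ :=
  (splitSteps_of_rtle hτ h hsum).eq_or_rel_or_add_two_le (f := card) fun _ _ => SplitStep.card_eq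

theorem splitOne_rtle (hd : (d, e) ∈ τ) (h2 : 2 ≤ d) : RTle (splitOne τ d e) τ :=
  .single <| .inl ⟨τ.erase (d, e), d, e, 1, d - 1, one_pos, by omega, by omega,
    (cons_erase hd).symm, rfl⟩

theorem fstSum_splitOne (hd : (d, e) ∈ τ) (h1 : 0 < d) : fstSum (splitOne τ d e) = fstSum τ := by
  conv_rhs => rw [← cons_erase hd]
  simp only [splitOne, fstSum_cons]
  omega

theorem card_splitOne (hd : (d, e) ∈ τ) : card (splitOne τ d e) = card τ + 1 := by
  conv_rhs => rw [← cons_erase hd]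
  simp [splitOne]

theorem fstSum_le_and_card_le (hν : IsRT n ν) (hd : (d, e) ∈ τ) (h1 : 0 < d)
    (h : RTle (splitOne τ d e) ν) (hν1 : (1, e) ∉ ν) :
    fstSum τ ≤ fstSum ν ∧ (fstSum τ = fstSum ν → card ν ≤ card τ) := by
  have hsum := fstSum_splitOne hd h1
  have hcard := card_splitOne hd
  refine ⟨hsum ▸ fstSum_le_of_rtle h, fun heq => ?_⟩
  rcases eq_or_splitStep_or_card_add_two_le hν h (by omega) with rfl | hstep | hle
  · exact absurd (mem_cons_self _ _) hν1
  · have := hstep.card_eq; omega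
  · omega

theorem fstSum_eq_and_card_eq {c f : ℕ} (hτ : IsRT n τ) (hν : IsRT n ν) (hd : (d, e) ∈ τ)
    (hc : (c, f) ∈ ν) (hτν : RTle (splitOne τ d e) ν) (hντ : RTle (splitOne ν c f) τ)
    (hν1 : (1, e) ∉ ν) (hτ1 : (1, f) ∉ τ) : fstSum τ = fstSum ν ∧ card τ = card ν := by
  obtain ⟨h₁, h₂⟩ := fstSum_le_and_card_le hν hd (hτ.1 _ hd).1 hτν hν1
  obtain ⟨h₃, h₄⟩ := fstSum_le_and_card_le hτ hc (hν.1 _ hc).1 hντ hτ1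
  have hsum := le_antisymm h₁ h₃
  exact ⟨hsum, le_antisymm (h₄ hsum.symm) (h₂ hsum)⟩

theorem exists_of_one_cons_eq_cons_cons {X : Multiset (ℕ × ℕ)} {a b f : ℕ}
    (h : (1, e) ::ₘ X = (a, f) ::ₘ (b, f) ::ₘ ρ) (hρ : (1, e) ∉ ρ) :
    ∃ c, (a + b, f) = (c + 1, e) ∧ X = (c, e) ::ₘ ρ := by
  have hmem : (1, e) ∈ (a, f) ::ₘ (b, f) ::ₘ ρ := h ▸ mem_cons_self _ _
  simp only [mem_cons, Prod.mk.injEq] at hmem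
  rcases hmem with ⟨rfl, rfl⟩ | ⟨rfl, rfl⟩ | hmem
  · exact ⟨b, by rw [add_comm], (cons_inj_right _).1 h⟩
  · exact ⟨a, rfl, (cons_inj_right _).1 (h.trans (cons_swap _ _ _))⟩
  · exact absurd hmem hρ

/-- When `fstSum` and `card` agree, `ν` arises from `τ` by moving a unit from `(d, e)` to
another pair `(b, e)`; unless `b = d - 1`, the pair `(d - 1, e)` survives in `ν`. -/
theorem eq_or_pred_mem_of_splitOne_rtle (hν : IsRT n ν) (hd : (d, e) ∈ τ) (h1 : 0 < d)
    (hν1 : (1, e) ∉ ν) (hsum : fstSum τ = fstSum ν) (hcard : card τ = card ν)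
    (h : RTle (splitOne τ d e) ν) : ν = τ ∨ (d - 1, e) ∈ ν := by
  obtain ⟨ρ, a, b, f, rfl, hsplit⟩ : SplitStep ν (splitOne τ d e) := by
    rcases eq_or_splitStep_or_card_add_two_le hν h (by rw [fstSum_splitOne hd h1, hsum])
      with rfl | hstep | hle
    · exact absurd (mem_cons_self _ _) hν1
    · exact hstep
    · have := card_splitOne hd (e := e); omega
  obtain ⟨c, hc, hX⟩ :=
    exists_of_one_cons_eq_cons_cons hsplit fun h => hν1 (mem_cons_of_mem h)
  rw [hc]
  rcases mem_cons.1 (hX ▸ mem_cons_self _ _ : (d - 1, e) ∈ (c, e) ::ₘ ρ) with hdc | hmem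
  · obtain rfl : c = d - 1 := by simp only [Prod.mk.injEq] at hdc; omega
    left
    rw [← (cons_inj_right _).1 hX, Nat.sub_add_cancel h1, cons_erase hd]
  · exact .inr (mem_cons_of_mem hmem)

/-- Descent: if `τ ≠ ν`, a pair `(x, e)` in one of them forces `(x - 1, e)` into the other. -/
theorem eq_of_splitOne_rtle (hτ : IsRT n τ) (hν : IsRT n ν) (hτ1 : (1, e) ∉ τ)
    (hν1 : (1, e) ∉ ν) (hsum : fstSum τ = fstSum ν) (hcard : card τ = card ν)
    (hτν : ∀ x, (x, e) ∈ τ → RTle (splitOne τ x e) ν)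
    (hντ : ∀ x, (x, e) ∈ ν → RTle (splitOne ν x e) τ) (hd : (d, e) ∈ τ) : τ = ν := by
  by_contra hne
  suffices ∀ x, (x, e) ∈ τ ∨ (x, e) ∈ ν → False from this d (.inl hd)
  intro x
  induction x using Nat.strong_induction_on with
  | _ x ih =>
    rintro (hx | hx)
    · have hx0 := (hτ.1 _ hx).1
      rcases eq_or_pred_mem_of_splitOne_rtle hν hx hx0 hν1 hsum hcard (hτν x hx) with h | h
      · exact hne h.symm
      · exact ih (x - 1) (by omega) (.inr h)
    · have hx0 := (hν.1 _ hx).1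
      rcases eq_or_pred_mem_of_splitOne_rtle hτ hx hx0 hτ1 hsum.symm hcard.symm (hντ x hx)
        with h | h
      · exact hne h
      · exact ih (x - 1) (by omega) (.inl h)

theorem eq_of_rtle_iff_of_mem_snd_one (hτ : IsRT n τ) (hν : IsRT n ν) (hτ1 : (1, 1) ∉ τ)
    (hν1 : (1, 1) ∉ ν) (hd : (d, 1) ∈ τ)
    (h : ∀ σ, IsRT n σ → (1, 1) ∈ σ → (RTle σ τ ↔ RTle σ ν)) : τ = ν := by
  have hτν : ∀ x, (x, 1) ∈ τ → RTle (splitOne τ x 1) ν := fun x hx =>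
    have hle := splitOne_rtle hx (hτ.two_le_of_mem hτ1 hx)
    (h _ (hτ.of_rtle hle) (mem_cons_self _ _)).1 hle
  have hντ : ∀ x, (x, 1) ∈ ν → RTle (splitOne ν x 1) τ := fun x hx =>
    have hle := splitOne_rtle hx (hν.two_le_of_mem hν1 hx)
    (h _ (hν.of_rtle hle) (mem_cons_self _ _)).2 hle
  obtain ⟨⟨c, _⟩, hc, rfl⟩ := exists_snd_eq_one_of_rtle (hτν d hd) ⟨_, mem_cons_self _ _, rfl⟩
  obtain ⟨hsum, hcard⟩ := fstSum_eq_and_card_eq hτ hν hd hc (hτν d hd) (hντ c hc) hν1 hτ1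
  exact eq_of_splitOne_rtle hτ hν hτ1 hν1 hsum hcard hτν hντ hd

theorem mem_map_swap {p : ℕ × ℕ} : p ∈ τ.map Prod.swap ↔ p.swap ∈ τ := by
  rw [← Prod.swap_swap p, mem_map_of_injective Prod.swap_injective, Prod.swap_swap]

theorem map_swap_map_swap : (τ.map Prod.swap).map Prod.swap = τ := by
  simp [Multiset.map_map]

theorem IsRT.map_swap (hτ : IsRT n τ) : IsRT n (τ.map Prod.swap) := by
  refine ⟨fun p hp => (hτ.1 _ (mem_map_swap.1 hp)).symm, ?_⟩
  simpa [Multiset.map_map, Function.comp_def, mul_comm] using hτ.2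

theorem ElemRef.map_swap (hτ : ∀ p ∈ τ, 0 < p.1 ∧ 0 < p.2) (h : ElemRef τ ρ) :
    ElemRef (ρ.map Prod.swap) (τ.map Prod.swap) := by
  rcases h with ⟨θ, d, e, a, b, ha, hb, rfl, rfl, rfl⟩ | ⟨θ, d, e, e', rfl, rfl⟩
  · exact .inr ⟨θ.map Prod.swap, e, a, b, by simp, by simp⟩
  · have he := (hτ _ (mem_cons_self _ _)).2
    have he' := (hτ _ (mem_cons_of_mem (mem_cons_self _ _))).2
    exact .inl ⟨θ.map Prod.swap, e + e', d, e, e', he, he', rfl, by simp, by simp⟩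

theorem rtle_map_swap (hτ : IsRT n τ) (h : RTle σ τ) :
    RTle (τ.map Prod.swap) (σ.map Prod.swap) := by
  induction h using ReflTransGen.head_induction_on generalizing n with
  | refl => exact .refl
  | head hstep _ ih => exact .tail (ih (hτ.of_elemRef hstep)) (hstep.map_swap hτ.1)

theorem rtle_map_swap_iff (hσ : IsRT n σ) (hτ : IsRT n τ) :
    RTle σ (τ.map Prod.swap) ↔ RTle τ (σ.map Prod.swap) := by
  constructor <;> intro h
  · simpa only [map_swap_map_swap] using rtle_map_swap hτ.map_swap h
  · simpa only [map_swap_map_swap] using rtle_map_swap hσ.map_swap h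

theorem eq_of_rtle_iff_of_mem_fst_one (hτ : IsRT n τ) (hν : IsRT n ν) (hτ1 : (1, 1) ∉ τ)
    (hν1 : (1, 1) ∉ ν) (hd : (1, e) ∈ τ)
    (h : ∀ σ, IsRT n σ → (1, 1) ∈ σ → (RTle τ σ ↔ RTle ν σ)) : τ = ν := by
  refine map_injective Prod.swap_injective <| eq_of_rtle_iff_of_mem_snd_one hτ.map_swap
    hν.map_swap (mt mem_map_swap.1 hτ1) (mt mem_map_swap.1 hν1) (mem_map_swap.2 hd)
    fun σ hσ hσ1 => ?_
  rw [rtle_map_swap_iff hσ hτ, rtle_map_swap_iff hσ hν]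
  exact h _ hσ.map_swap (mem_map_swap.2 hσ1)

theorem eq_of_rtle_iff_of_one_one_notMem (hτ : IsRT n τ) (hν : IsRT n ν) (hτ1 : (1, 1) ∉ τ)
    (hν1 : (1, 1) ∉ ν) (hτN : ∃ p ∈ τ, p.1 = 1 ∨ p.2 = 1)
    (hdown : ∀ σ, IsRT n σ → (1, 1) ∈ σ → (RTle σ τ ↔ RTle σ ν))
    (hup : ∀ σ, IsRT n σ → (1, 1) ∈ σ → (RTle τ σ ↔ RTle ν σ)) : τ = ν := by
  obtain ⟨⟨a, b⟩, hp, ha | hb⟩ := hτN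
  · obtain rfl : a = 1 := ha
    exact eq_of_rtle_iff_of_mem_fst_one hτ hν hτ1 hν1 hp hup
  · obtain rfl : b = 1 := hb
    exact eq_of_rtle_iff_of_mem_snd_one hτ hν hτ1 hν1 hp hdown

theorem eq_of_rtle_iff_of_forall_fst_ne_one (hτ : IsRT n τ) (hν : IsRT n ν)
    (hτ1 : ∀ p ∈ τ, p.1 ≠ 1) (hν1 : ∀ p ∈ ν, p.1 ≠ 1)
    (h : ∀ σ, IsRT n σ → (∃ p ∈ σ, p.1 = 1) → (RTle σ τ ↔ RTle σ ν)) : τ = ν := by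
  rcases empty_or_exists_mem τ with rfl | ⟨⟨d, e⟩, hd⟩
  · exact (hν.eq_zero_iff.2 (hτ.eq_zero_iff.1 rfl)).symm
  have hν0 : ν ≠ 0 := by
    rw [Ne, hν.eq_zero_iff, ← hτ.eq_zero_iff]
    rintro rfl
    exact notMem_zero _ hd
  obtain ⟨⟨c, f⟩, hc⟩ := exists_mem_of_ne_zero hν0
  have hτν : ∀ x y, (x, y) ∈ τ → RTle (splitOne τ x y) ν := fun x y hx =>
    have hle := splitOne_rtle hx (hτ.two_le_of_mem (fun h => hτ1 _ h rfl) hx)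
    (h _ (hτ.of_rtle hle) ⟨_, mem_cons_self _ _, rfl⟩).1 hle
  have hντ : ∀ x y, (x, y) ∈ ν → RTle (splitOne ν x y) τ := fun x y hx =>
    have hle := splitOne_rtle hx (hν.two_le_of_mem (fun h => hν1 _ h rfl) hx)
    (h _ (hν.of_rtle hle) ⟨_, mem_cons_self _ _, rfl⟩).2 hle
  obtain ⟨hsum, hcard⟩ := fstSum_eq_and_card_eq hτ hν hd hc (hτν _ _ hd) (hντ _ _ hc)
    (fun h => hν1 _ h rfl) (fun h => hτ1 _ h rfl)
  exact eq_of_splitOne_rtle hτ hν (fun h => hτ1 _ h rfl) (fun h => hν1 _ h rfl) hsum hcard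
    (fun x => hτν x e) (fun x => hντ x e) hd

end

theorem luna_stmt13_general (n : ℕ)
    (α : Multiset (ℕ × ℕ) → Multiset (ℕ × ℕ))
    (hbij : Set.BijOn α {τ | IsRT n τ} {τ | IsRT n τ})
    (hord : ∀ τ, IsRT n τ → ∀ ν, IsRT n ν → (RTle τ ν ↔ RTle (α τ) (α ν)))
    (hfix : ∀ μ, IsRT (n - 1) μ → α ((1, 1) ::ₘ μ) = (1, 1) ::ₘ μ) :
    ∀ τ, IsRT n τ → α τ = τ := by
  have fix₁ : ∀ σ, IsRT n σ → (1, 1) ∈ σ → α σ = σ := fun σ hσ h => by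
    rw [← cons_erase h]
    exact hfix _ (by simpa using hσ.erase h)
  have fix₂ : ∀ σ, IsRT n σ → (∃ p ∈ σ, p.1 = 1 ∨ p.2 = 1) → α σ = σ := fun σ hσ hσN => by
    by_cases h : (1, 1) ∈ σ
    · exact fix₁ σ hσ h
    exact apply_eq_self_of_forall_rel_iff hbij.mapsTo hbij.injOn hord fix₁ hσ
      fun ν hν hν1 => eq_of_rtle_iff_of_one_one_notMem hσ hν h hν1 hσN
  intro τ hτ
  by_cases h : ∃ p ∈ τ, p.1 = 1 ∨ p.2 = 1
  · exact fix₂ τ hτ h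
  refine apply_eq_self_of_forall_rel_iff hbij.mapsTo hbij.injOn hord fix₂ hτ
    fun ν hν hνN hdown _ => ?_
  push Not at h hνN
  exact eq_of_rtle_iff_of_forall_fst_ne_one hτ hν (fun p hp => (h p hp).1)
    (fun p hp => (hνN p hp).1) fun σ hσ ⟨p, hp, hp1⟩ => hdown σ hσ ⟨p, hp, .inl hp1⟩

/-- (Proposition 8.7(a).) If an automorphism `α` of the partially ordered set
`(RT_n, ⪯)` fixes every representation type of the form `[(1,1)] ⊎ μ` with
`μ ∈ RT_{n-1}`, then `α` is the identity. -/
theorem luna_stmt13 (n : ℕ) (hn : 1 ≤ n)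
    (α : Multiset (ℕ × ℕ) → Multiset (ℕ × ℕ))
    (hbij : Set.BijOn α {τ | IsRT n τ} {τ | IsRT n τ})
    (hord : ∀ τ, IsRT n τ → ∀ ν, IsRT n ν → (RTle τ ν ↔ RTle (α τ) (α ν)))
    (hfix : ∀ μ, IsRT (n - 1) μ → α ((1, 1) ::ₘ μ) = (1, 1) ::ₘ μ) :
    ∀ τ, IsRT n τ → α τ = τ :=
  luna_stmt13_general n α hbij hord hfix
end
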